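/- arXiv:2602.11559 — 3 statements merged into one kernel-verified Lean document; each statement's English description precedes it below -/
import Mathlib

section
/- For any word β = (i_1,…,i_r) in the index set I and any element v ≤ δ(β) of the Weyl group (Bruhat order), there exists a subsequence (i_{q_1},…,i_{q_m}) of β with m = ℓ(v) such that s_{i_{q_1}}⋯s_{i_{q_m}} = v is a reduced expression; moreover among all such subsequences there is a unique one whose index sequence (q_1,…,q_m) is maximal in left-to-right lexicographic order. -/
open CoxeterSystem

variable {B : Type*} {W : Type*} [Group W] {M : CoxeterMatrix B}

/-- Bruhat order on a Coxeter group: `u ≤ w` iff `u` is the product of a subword of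
some reduced word for `w`. -/
def BruhatLE (cs : CoxeterSystem M W) (u w : W) : Prop :=
  ∃ l : List B, cs.IsReduced l ∧ w = cs.wordProd l ∧
    ∃ l' : List B, l'.Sublist l ∧ u = cs.wordProd l'

/-- The Demazure product of a word, via the (equivalent) length-based recursion
`δ([]) = 1`, `δ(i :: b) = s_i δ(b)` if this increases length, and `δ(b)` otherwise. -/
noncomputable def demazure (cs : CoxeterSystem M W) : List B → W
  | [] => 1
  | i :: b =>
    if cs.length (demazure cs b) < cs.length (cs.simple i * demazure cs b) then
      cs.simple i * demazure cs b
    else demazure cs b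

/-!
Every `v ≤ δ(β)` is the product of a reduced subword of `β`; as there are finitely many index
lists of length `ℓ(v)`, the lexicographic maximum among those spelling `v` is then unique.

The Demazure product `δ(β)` is itself the product of a subword of `β`. In the chain description
of the Bruhat order, `v` is reached from `δ(β)` by multiplying with length-decreasing reflections,
and the strong exchange condition turns each step into the deletion of a letter; at the end, every
word contains a reduced subword with the same product. `BruhatLE` implies the chain order because
`π κ ≤ δ(ω)` for every subword `κ` of `ω`, by induction on `ω`: the Demazure step
`w ↦ max(w, s_i w)` is monotone for the chain order (the lifting property).

The strong exchange condition comes from the action of `W` on `W × ℤˣ` in which `s i` conjugates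
by `s i` and flips the sign at `s i`: it makes the parity of the number of occurrences of `t` in
the left inversion sequence of a word depend only on the product of the word.
-/

open List

namespace CoxeterSystem

variable (cs : CoxeterSystem M W)

local prefix:100 "s" => cs.simple
local prefix:100 "π" => cs.wordProd
local prefix:100 "ℓ" => cs.length
local prefix:100 "lis" => cs.leftInvSeq

theorem leftInvSeq_append (ω υ : List B) :
    lis (ω ++ υ) = lis ω ++ (lis υ).map (MulAut.conj (π ω)) := by
  induction ω with
  | nil => simp
  | cons i ω ih =>
    rw [cons_append, leftInvSeq, leftInvSeq, ih, map_append, map_map, wordProd_cons, map_mul]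
    rfl

theorem prod_map_alternatingWord_two_mul {G : Type*} [Monoid G] (f : B → G) (i j : B) (m : ℕ) :
    ((alternatingWord i j (2 * m)).map f).prod = (f i * f j) ^ m := by
  induction m with
  | zero => simp [alternatingWord]
  | succ m ih =>
    have : alternatingWord i j (2 * (m + 1)) = i :: j :: alternatingWord i j (2 * m) := by
      rw [show 2 * (m + 1) = 2 * m + 1 + 1 by ring, alternatingWord_succ', alternatingWord_succ']
      simp
    rw [this, map_cons, map_cons, prod_cons, prod_cons, ih, pow_succ', mul_assoc]

theorem wordProd_alternatingWord_add_two_mul (i j : B) (n : ℕ) :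
    π (alternatingWord i j (n + 2 * M i j)) = π (alternatingWord i j n) := by
  rw [prod_alternatingWord_eq_mul_pow, prod_alternatingWord_eq_mul_pow,
    show (n + 2 * M i j) / 2 = n / 2 + M i j by omega, pow_add, simple_mul_simple_pow, mul_one]
  simp [parity_simps]

theorem leftInvSeq_alternatingWord (i j : B) (p : ℕ) :
    lis (alternatingWord i j (2 * p)) =
      (range (2 * p)).map fun k => π (alternatingWord j i (2 * k + 1)) :=
  ext_getElem (by simp) fun k _ hk => by
    simp [getElem_leftInvSeq_alternatingWord cs i j p k (by simpa using hk)]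

theorem simple_mul_mul_simple_eq_simple_iff (i : B) (t : W) : s i * t * s i = s i ↔ t = s i := by
  constructor
  · intro h
    simpa [mul_assoc] using congrArg (s i * · * s i) h
  · rintro rfl
    simp

section Sign

variable [DecidableEq W]

def invSign (ω : List B) (t : W) : ℤˣ := (-1) ^ (lis ω).count t

theorem invSign_append (ω υ : List B) (t : W) :
    cs.invSign (ω ++ υ) t = cs.invSign ω t * cs.invSign υ ((π ω)⁻¹ * t * π ω) := by
  have hcount :
      ((lis υ).map (MulAut.conj (π ω))).count t = (lis υ).count ((π ω)⁻¹ * t * π ω) := by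
    conv_lhs => rw [show t = MulAut.conj (π ω) ((π ω)⁻¹ * t * π ω) by simp [mul_assoc]]
    exact count_map_of_injective _ _ (MulAut.conj (π ω)).injective _
  rw [invSign, leftInvSeq_append, count_append, hcount, pow_add, invSign, invSign]

theorem invSign_singleton (i : B) (t : W) :
    cs.invSign [i] t = if t = s i then -1 else 1 := by
  by_cases h : t = s i <;> simp [invSign, h, eq_comm]

theorem even_count_leftInvSeq_braid (i j : B) (t : W) :
    Even ((lis (alternatingWord i j (2 * M i j))).count t) := by
  rw [leftInvSeq_alternatingWord, two_mul, range_add, map_append, map_map, count_append]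
  have hperiod : (fun k => π (alternatingWord j i (2 * k + 1))) ∘ (M i j + ·) =
      fun k => π (alternatingWord j i (2 * k + 1)) := by
    funext k
    rw [Function.comp_apply, show 2 * (M i j + k) + 1 = 2 * k + 1 + 2 * M j i by
      rw [M.symmetric]; ring]
    exact cs.wordProd_alternatingWord_add_two_mul j i _
  rw [hperiod]
  exact ⟨_, rfl⟩

theorem invSign_singleton_conj (i : B) (t : W) :
    cs.invSign [i] (s i * t * s i) = cs.invSign [i] t := by
  simp only [invSign_singleton, simple_mul_mul_simple_eq_simple_iff]

def reflPerm (i : B) : Equiv.Perm (W × ℤˣ) :=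
  Function.Involutive.toPerm (fun p => (s i * p.1 * s i, cs.invSign [i] p.1 * p.2)) <| by
    rintro ⟨t, e⟩
    simp only [invSign_singleton_conj, ← mul_assoc, Int.units_mul_self, one_mul]
    simp [mul_assoc]

theorem reflPerm_apply (i : B) (t : W) (e : ℤˣ) :
    cs.reflPerm i (t, e) = (s i * t * s i, cs.invSign [i] t * e) := rfl

theorem prod_map_reflPerm_apply (ω : List B) (t : W) (e : ℤˣ) :
    (ω.map cs.reflPerm).prod (t, e) =
      (π ω * t * (π ω)⁻¹, cs.invSign ω (π ω * t * (π ω)⁻¹) * e) := by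
  induction ω using List.reverseRecOn generalizing t e with
  | nil => simp [invSign]
  | append_singleton ω i ih =>
    have hconj :
        π (ω ++ [i]) * t * (π (ω ++ [i]))⁻¹ = π ω * (s i * t * s i) * (π ω)⁻¹ := by
      simp [wordProd_append, mul_assoc]
    have hcancel :
        (π ω)⁻¹ * (π ω * (s i * t * s i) * (π ω)⁻¹) * π ω = s i * t * s i := by
      group
    rw [map_append, prod_append, map_singleton, prod_singleton, Equiv.Perm.mul_apply,
      reflPerm_apply, ih, hconj, invSign_append, hcancel, invSign_singleton_conj]
    simp only [mul_assoc]

theorem isLiftable_reflPerm : M.IsLiftable cs.reflPerm := fun i j => by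
  rw [← prod_map_alternatingWord_two_mul]
  ext1 ⟨t, e⟩
  have hone : π (alternatingWord i j (2 * M i j)) = 1 := by
    simpa [alternatingWord] using cs.wordProd_alternatingWord_add_two_mul i j 0
  simp [prod_map_reflPerm_apply, hone, invSign, (cs.even_count_leftInvSeq_braid i j t).neg_one_pow]

noncomputable def reflRep : W →* Equiv.Perm (W × ℤˣ) :=
  cs.lift ⟨cs.reflPerm, cs.isLiftable_reflPerm⟩

theorem reflRep_wordProd (ω : List B) : cs.reflRep (π ω) = (ω.map cs.reflPerm).prod := by
  rw [wordProd, map_list_prod, map_map]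
  congr 2
  funext i
  exact cs.lift_apply_simple cs.isLiftable_reflPerm i

theorem invSign_eq_of_wordProd_eq {ω ω' : List B} (h : π ω = π ω') (t : W) :
    cs.invSign ω t = cs.invSign ω' t := by
  have hcancel : π ω * ((π ω)⁻¹ * t * π ω) * (π ω)⁻¹ = t := by group
  have key : ∀ υ : List B, π υ = π ω →
      cs.reflRep (π ω) ((π ω)⁻¹ * t * π ω, 1) = (t, cs.invSign υ t) := by
    intro υ hυ
    have := cs.prod_map_reflPerm_apply υ ((π ω)⁻¹ * t * π ω) 1
    rwa [← reflRep_wordProd, hυ, hcancel, mul_one] at this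
  simpa using (key ω rfl).symm.trans (key ω' h.symm)

theorem exists_wordProd_eq_and_invSign_eq_neg_one {t : W} (ht : cs.IsReflection t) :
    ∃ c : List B, π c = t ∧ cs.invSign c t = -1 := by
  obtain ⟨w, i, rfl⟩ := ht
  obtain ⟨r, rfl⟩ := cs.wordProd_surjective w
  -- `c` is the palindrome `r ++ i :: r.reverse`; its two halves cancel since `r ++ r.reverse`
  -- spells `1`.
  have hconj : (π r)⁻¹ * (π r * s i * (π r)⁻¹) * π r = s i := by group
  have hcancel : cs.invSign (r ++ r.reverse) (π r * s i * (π r)⁻¹) = 1 := by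
    rw [cs.invSign_eq_of_wordProd_eq (ω' := []) (by simp [wordProd_append, wordProd_reverse])]
    simp [invSign]
  rw [invSign_append, hconj] at hcancel
  refine ⟨r ++ i :: r.reverse,
    by simp [wordProd_append, wordProd_cons, wordProd_reverse, mul_assoc], ?_⟩
  rw [invSign_append, hconj, ← singleton_append, invSign_append, wordProd_singleton,
    inv_mul_cancel, one_mul, invSign_singleton, if_pos rfl, mul_left_comm, hcancel, mul_one]

end Sign

theorem mem_leftInvSeq_of_isLeftInversion {ω : List B} {t : W}
    (ht : cs.IsLeftInversion (π ω) t) : t ∈ lis ω := by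
  classical
  -- `ω` spells the same element as `c ++ υ`, with `π c = t` and `υ` reduced for `t * π ω`;
  -- `t` occurs an odd number of times in the left inversion sequence of `c`, and not in that
  -- of `υ`.
  obtain ⟨c, hc, hsign⟩ := cs.exists_wordProd_eq_and_invSign_eq_neg_one ht.1
  obtain ⟨υ, hυ, hυω⟩ := cs.exists_isReduced (t * π ω)
  have hυsign : cs.invSign υ t = 1 := by
    rw [invSign, count_eq_zero.mpr, pow_zero]
    intro hmem
    have := (cs.isLeftInversion_of_mem_leftInvSeq hυ hmem).2
    rw [← hυω, ← mul_assoc, ht.1.mul_self, one_mul] at this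
    exact ht.2.not_gt this
  have hprod : π (c ++ υ) = π ω := by
    rw [wordProd_append, hc, ← hυω, ← mul_assoc, ht.1.mul_self, one_mul]
  have hωsign : cs.invSign ω t = -1 := by
    rw [← cs.invSign_eq_of_wordProd_eq hprod, invSign_append, hc, inv_mul_cancel, one_mul,
      hsign, hυsign, mul_one]
  by_contra hmem
  rw [invSign, count_eq_zero.mpr hmem, pow_zero] at hωsign
  exact absurd hωsign (by decide)

/-- The strong exchange condition. -/
theorem exists_wordProd_eraseIdx_eq_mul {ω : List B} {t : W} (ht : cs.IsLeftInversion (π ω) t) :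
    ∃ j < ω.length, π (ω.eraseIdx j) = t * π ω := by
  obtain ⟨j, hj, hjt⟩ := getElem_of_mem (cs.mem_leftInvSeq_of_isLeftInversion ht)
  refine ⟨j, by simpa using hj, ?_⟩
  rw [← getD_leftInvSeq_mul_wordProd, getD_eq_getElem _ _ hj, hjt]

def BruhatStep (u w : W) : Prop := ∃ t, cs.IsLeftInversion w t ∧ u = t * w

def BruhatChain : W → W → Prop := Relation.ReflTransGen cs.BruhatStep

theorem bruhatStep_simple_mul {w : W} {i : B} (h : ℓ (s i * w) < ℓ w) :
    cs.BruhatStep (s i * w) w :=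
  ⟨s i, ⟨cs.isReflection_simple i, h⟩, rfl⟩

variable {cs} in
theorem IsReduced.bruhatStep_eraseIdx {ω : List B} (hω : cs.IsReduced ω) {j : ℕ}
    (hj : j < ω.length) : cs.BruhatStep (π (ω.eraseIdx j)) (π ω) := by
  have hj' : j < (lis ω).length := by simpa using hj
  refine ⟨(lis ω)[j], cs.isLeftInversion_of_mem_leftInvSeq hω (getElem_mem hj'), ?_⟩
  rw [← getD_leftInvSeq_mul_wordProd, getD_eq_getElem _ _ hj']

variable {cs} in
/-- The lifting property, in the one case not settled by multiplying a chain step by `s i`. -/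
theorem BruhatStep.bruhatChain_simple_mul {u w : W} (h : cs.BruhatStep u w) {i : B}
    (hi : ℓ (s i * w) < ℓ w) : cs.BruhatChain (s i * u) w := by
  obtain ⟨t, ht, rfl⟩ := h
  obtain ⟨m, hm, hmw⟩ := cs.exists_isReduced (s i * w)
  have hw : w = π (i :: m) := by rw [wordProd_cons, ← hmw, simple_mul_simple_cancel_left]
  subst hw
  obtain ⟨_ | j, hj, hu⟩ := cs.exists_wordProd_eraseIdx_eq_mul ht
  · rw [← hu, eraseIdx_cons_zero, ← wordProd_cons]
    exact .refl
  · rw [← hu, eraseIdx_cons_succ, wordProd_cons, simple_mul_simple_cancel_left]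
    refine .tail (.single (hm.bruhatStep_eraseIdx (by simpa using hj))) ?_
    rw [← hmw]
    exact cs.bruhatStep_simple_mul hi

noncomputable def demazureStep (i : B) (w : W) : W :=
  if ℓ w < ℓ (s i * w) then s i * w else w

theorem demazure_cons (i : B) (β : List B) :
    demazure cs (i :: β) = cs.demazureStep i (demazure cs β) := by
  rw [demazure, demazureStep]

theorem bruhatChain_demazureStep (i : B) (w : W) : cs.BruhatChain w (cs.demazureStep i w) := by
  unfold demazureStep
  split_ifs with h
  · refine .single ⟨s i, ⟨cs.isReflection_simple i, ?_⟩, ?_⟩ <;>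
      rw [simple_mul_simple_cancel_left]
    exact h
  · exact .refl

theorem bruhatChain_simple_mul_demazureStep (i : B) (w : W) :
    cs.BruhatChain (s i * w) (cs.demazureStep i w) := by
  unfold demazureStep
  split_ifs with h
  · exact .refl
  · refine .single (cs.bruhatStep_simple_mul ?_)
    rcases cs.length_simple_mul w i with h' | h' <;> omega

variable {cs} in
theorem BruhatStep.bruhatChain_demazureStep {u w : W} (h : cs.BruhatStep u w) (i : B) :
    cs.BruhatChain (cs.demazureStep i u) (cs.demazureStep i w) := by
  by_cases hu : ℓ u < ℓ (s i * u)
  swap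
  · rw [demazureStep, if_neg hu]
    exact (Relation.ReflTransGen.single h).trans (cs.bruhatChain_demazureStep i w)
  rw [demazureStep, if_pos hu, demazureStep]
  split_ifs with hw
  · obtain ⟨t, ht, rfl⟩ := h
    refine .single ⟨s i * t * (s i)⁻¹, ⟨ht.1.conj (s i), ?_⟩, by group⟩
    rw [show s i * t * (s i)⁻¹ * (s i * w) = s i * (t * w) by group]
    have := ht.2
    rcases cs.length_simple_mul (t * w) i with h' | h' <;> omega
  · exact h.bruhatChain_simple_mul (by rcases cs.length_simple_mul w i with h' | h' <;> omega)

variable {cs} in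
theorem BruhatChain.demazureStep {u w : W} (h : cs.BruhatChain u w) (i : B) :
    cs.BruhatChain (cs.demazureStep i u) (cs.demazureStep i w) := by
  induction h with
  | refl => exact .refl
  | tail _ hstep ih => exact ih.trans (hstep.bruhatChain_demazureStep i)

theorem bruhatChain_wordProd_demazure_of_sublist {κ ω : List B} (h : κ <+ ω) :
    cs.BruhatChain (π κ) (demazure cs ω) := by
  induction h with
  | slnil => exact .refl
  | cons i _ ih => exact ih.trans (cs.bruhatChain_demazureStep i _)
  | cons_cons i _ ih =>
    rw [wordProd_cons, demazure_cons]
    exact (cs.bruhatChain_simple_mul_demazureStep i _).trans (ih.demazureStep i)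

theorem demazure_eq_wordProd_of_isReduced {ω : List B} (hω : cs.IsReduced ω) :
    demazure cs ω = π ω := by
  induction ω with
  | nil => rfl
  | cons i ω ih =>
    have hω' : cs.IsReduced ω := by simpa using hω.drop 1
    have hlen : ℓ (s i * π ω) = ω.length + 1 := by rw [← wordProd_cons]; exact hω
    rw [demazure_cons, ih hω', demazureStep, if_pos (by rw [hlen, hω']; omega), wordProd_cons]

variable {cs} in
theorem bruhatChain_of_bruhatLE {u w : W} (h : BruhatLE cs u w) : cs.BruhatChain u w := by
  obtain ⟨l, hl, rfl, l', hl', rfl⟩ := h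
  simpa [demazure_eq_wordProd_of_isReduced cs hl] using
    cs.bruhatChain_wordProd_demazure_of_sublist hl'

variable {cs} in
theorem BruhatChain.exists_sublist_wordProd_eq {u w : W} (h : cs.BruhatChain u w) {ω : List B}
    (hω : π ω = w) : ∃ κ, κ <+ ω ∧ π κ = u := by
  induction h using Relation.ReflTransGen.head_induction_on with
  | refl => exact ⟨ω, .refl ω, hω⟩
  | head hstep _ ih =>
    obtain ⟨κ, hκ, rfl⟩ := ih
    obtain ⟨t, ht, rfl⟩ := hstep
    obtain ⟨j, -, hj⟩ := cs.exists_wordProd_eraseIdx_eq_mul ht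
    exact ⟨κ.eraseIdx j, (eraseIdx_sublist κ j).trans hκ, hj⟩

theorem exists_isReduced_sublist (ω : List B) :
    ∃ κ, κ <+ ω ∧ cs.IsReduced κ ∧ π κ = π ω := by
  induction ω with
  | nil => exact ⟨[], .slnil, by simp [IsReduced], rfl⟩
  | cons i ω ih =>
    obtain ⟨κ, hκ, hred, hprod⟩ := ih
    have hred' : ℓ (π κ) = κ.length := hred
    rcases cs.length_simple_mul (π κ) i with h | h
    · refine ⟨i :: κ, hκ.cons_cons i, ?_, by rw [wordProd_cons, wordProd_cons, hprod]⟩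
      rw [IsReduced, wordProd_cons, h, hred', length_cons]
    · obtain ⟨j, hj, hκj⟩ :=
        cs.exists_wordProd_eraseIdx_eq_mul (ω := κ) (t := s i)
          ⟨cs.isReflection_simple i, by omega⟩
      refine ⟨κ.eraseIdx j, ((eraseIdx_sublist κ j).trans hκ).cons i, ?_, ?_⟩
      · rw [IsReduced, hκj, length_eraseIdx_of_lt hj]
        omega
      · rw [hκj, hprod, wordProd_cons]

theorem exists_sublist_wordProd_eq_demazure (ω : List B) :
    ∃ κ, κ <+ ω ∧ π κ = demazure cs ω := by
  induction ω with
  | nil => exact ⟨[], .slnil, rfl⟩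
  | cons i ω ih =>
    obtain ⟨κ, hκ, hprod⟩ := ih
    rw [demazure_cons, demazureStep]
    split_ifs
    · exact ⟨i :: κ, hκ.cons_cons i, by rw [wordProd_cons, hprod]⟩
    · exact ⟨κ, hκ.cons i, hprod⟩

variable {cs} in
theorem exists_isReduced_sublist_of_bruhatLE_demazure {β : List B} {v : W}
    (hv : BruhatLE cs v (demazure cs β)) : ∃ κ, κ <+ β ∧ cs.IsReduced κ ∧ π κ = v := by
  obtain ⟨κ₀, hκ₀, hprod₀⟩ := cs.exists_sublist_wordProd_eq_demazure β
  obtain ⟨κ₁, hκ₁, rfl⟩ :=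
    (bruhatChain_of_bruhatLE hv).exists_sublist_wordProd_eq hprod₀
  obtain ⟨κ, hκ, hred, hprod⟩ := cs.exists_isReduced_sublist κ₁
  exact ⟨κ, hκ.trans (hκ₁.trans hκ₀), hred, hprod⟩

end CoxeterSystem

theorem Set.Finite.existsUnique_isGreatest {α : Type*} [LinearOrder α] {S : Set α}
    (hS : S.Finite) (hne : S.Nonempty) : ∃! a, IsGreatest S a := by
  obtain ⟨a, ha, hmax⟩ := Set.exists_max_image S id hS hne
  exact ⟨a, ⟨ha, hmax⟩, fun b hb => hb.unique ⟨ha, hmax⟩⟩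

theorem exists_unique_leftmost_subexpression_general (cs : CoxeterSystem M W)
    (β : List B) (v : W) (hv : BruhatLE cs v (demazure cs β)) :
    ∃! qs : List (Fin β.length),
      (List.Chain' (· < ·) qs ∧ qs.length = cs.length v ∧
        cs.wordProd (qs.map β.get) = v) ∧
      ∀ qs' : List (Fin β.length),
        (List.Chain' (· < ·) qs' ∧ qs'.length = cs.length v ∧
          cs.wordProd (qs'.map β.get) = v) →
        qs' = qs ∨ List.Lex (· < ·) qs' qs := by
  obtain ⟨κ, hκβ, hred, hκv⟩ := exists_isReduced_sublist_of_bruhatLE_demazure hv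
  obtain ⟨qs, rfl, hqs⟩ := sublist_eq_map_getElem hκβ
  have hfin : {qs : List (Fin β.length) | List.IsChain (· < ·) qs ∧ qs.length = cs.length v ∧
      cs.wordProd (qs.map β.get) = v}.Finite :=
    (List.finite_length_eq _ (cs.length v)).subset fun _ h => h.2.1
  have hne : ∃ qs : List (Fin β.length), List.IsChain (· < ·) qs ∧
      qs.length = cs.length v ∧ cs.wordProd (qs.map β.get) = v :=
    ⟨qs, isChain_iff_pairwise.mpr hqs, by simpa [← hκv] using hred.symm,
      by rw [← hκv]; rfl⟩
  exact hfin.existsUnique_isGreatest hne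

/-- For any word `β` in `I` and any `v ≤ δ(β)` in Bruhat order, there exists a
subsequence of `β` of length `ℓ(v)` whose product is `v` (a reduced subexpression);
moreover among all such subsequences there is a unique one whose index sequence is
maximal in left-to-right lexicographic order (the leftmost subexpression). -/
theorem exists_unique_leftmost_subexpression (cs : CoxeterSystem M W) [Finite W]
    (β : List B) (v : W) (hv : BruhatLE cs v (demazure cs β)) :
    ∃! qs : List (Fin β.length),
      (List.Chain' (· < ·) qs ∧ qs.length = cs.length v ∧
        cs.wordProd (qs.map β.get) = v) ∧
      ∀ qs' : List (Fin β.length),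
        (List.Chain' (· < ·) qs' ∧ qs'.length = cs.length v ∧
          cs.wordProd (qs'.map β.get) = v) →
        qs' = qs ∨ List.Lex (· < ·) qs' qs :=
  exists_unique_leftmost_subexpression_general cs β v hv
end

section
/- The bar map defined on generators by f_{i,k} ↦ f_{i,k} and q^{±1/2} ↦ q^{∓1/2} extends to a well-defined Q-algebra anti-automorphism of the bosonic extension algebra 𝒜̂. -/
/-- Generators of the bosonic extension algebra: the `f_{i,k}`, together with
`t = q^{1/2}` and its inverse `t⁻¹ = q^{-1/2}` (so `q = t²`). -/
inductive BosonicGen (I : Type) : Type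
  | f : I → ℤ → BosonicGen I
  | t : BosonicGen I
  | tinv : BosonicGen I

noncomputable section
open FreeAlgebra

abbrev BFree (I : Type) := FreeAlgebra ℚ (BosonicGen I)

def Bf (I : Type) (i : I) (k : ℤ) : BFree I := ι ℚ (BosonicGen.f i k)
def Bt (I : Type) : BFree I := ι ℚ BosonicGen.t
def Btinv (I : Type) : BFree I := ι ℚ BosonicGen.tinv

/-- `q^e` as a word in the generators: `q = t²`, so `q^e = t^{2e}` for `e ≥ 0`
and `q^e = (t⁻¹)^{-2e}` for `e < 0`. -/
def Bqpow (I : Type) (e : ℤ) : BFree I :=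
  if 0 ≤ e then Bt I ^ (2 * e.toNat) else Btinv I ^ (2 * (-e).toNat)

/-- The defining relations of the bosonic extension algebra of a simply-laced
Cartan matrix `c`: `t` is a central invertible scalar with inverse `t⁻¹`;
the quantum Serre relations at each fixed level `p`; and for `m < p` the relation
`f_{i,m} f_{j,p} = q^{(-1)^{p-m+1} c_{ij}} f_{j,p} f_{i,m} + δ_{(i,m+1),(j,p)} (1-q²)`. -/
inductive BosonicRel {I : Type} (c : I → I → ℤ) : BFree I → BFree I → Prop
  | t_tinv : BosonicRel c (Bt I * Btinv I) 1
  | tinv_t : BosonicRel c (Btinv I * Bt I) 1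
  | t_central (i : I) (k : ℤ) : BosonicRel c (Bt I * Bf I i k) (Bf I i k * Bt I)
  | tinv_central (i : I) (k : ℤ) : BosonicRel c (Btinv I * Bf I i k) (Bf I i k * Btinv I)
  | serre_zero (i j : I) (p : ℤ) : i ≠ j → c i j = 0 →
      BosonicRel c (Bf I i p * Bf I j p) (Bf I j p * Bf I i p)
  | serre_one (i j : I) (p : ℤ) : i ≠ j → c i j = -1 →
      BosonicRel c
        (Bf I i p * Bf I i p * Bf I j p + Bf I j p * (Bf I i p * Bf I i p))
        ((Bt I ^ 2 + Btinv I ^ 2) * (Bf I i p * Bf I j p * Bf I i p))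
  | comm (i j : I) (m p : ℤ) : m < p → ¬(i = j ∧ p = m + 1) →
      BosonicRel c (Bf I i m * Bf I j p)
        (Bqpow I ((-1 : ℤ) ^ (p - m + 1).toNat * c i j) * (Bf I j p * Bf I i m))
  | comm_delta (i : I) (m : ℤ) :
      BosonicRel c (Bf I i m * Bf I i (m + 1))
        (Bqpow I (c i i) * (Bf I i (m + 1) * Bf I i m) + (1 - Bt I ^ 4))

/-- The bosonic extension algebra `𝒜̂` as a presented `ℚ`-algebra. -/
abbrev BosonicExt {I : Type} (c : I → I → ℤ) := RingQuot (BosonicRel c)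

def bf {I : Type} (c : I → I → ℤ) (i : I) (k : ℤ) : BosonicExt c :=
  RingQuot.mkAlgHom ℚ (BosonicRel c) (Bf I i k)

def bt {I : Type} (c : I → I → ℤ) : BosonicExt c :=
  RingQuot.mkAlgHom ℚ (BosonicRel c) (Bt I)

def btinv {I : Type} (c : I → I → ℤ) : BosonicExt c :=
  RingQuot.mkAlgHom ℚ (BosonicRel c) (Btinv I)

namespace BarAux

open MulOpposite

variable {I : Type} (c : I → I → ℤ)

local notation "mkQ" => RingQuot.mkAlgHom ℚ (BosonicRel c)

lemma bt_mul_btinv : mkQ (Bt I) * mkQ (Btinv I) = 1 := by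
  have := RingQuot.mkAlgHom_rel ℚ (BosonicRel.t_tinv (c := c))
  simpa [map_mul] using this

lemma btinv_mul_bt : mkQ (Btinv I) * mkQ (Bt I) = 1 := by
  have := RingQuot.mkAlgHom_rel ℚ (BosonicRel.tinv_t (c := c))
  simpa [map_mul] using this

lemma commute_bt_btinv : Commute (mkQ (Bt I)) (mkQ (Btinv I)) := by
  unfold Commute SemiconjBy
  rw [bt_mul_btinv, btinv_mul_bt]

lemma commute_bt_bf (i : I) (k : ℤ) : Commute (mkQ (Bt I)) (mkQ (Bf I i k)) := by
  have := RingQuot.mkAlgHom_rel ℚ (BosonicRel.t_central (c := c) i k)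
  unfold Commute SemiconjBy
  simpa [map_mul] using this

lemma commute_btinv_bf (i : I) (k : ℤ) : Commute (mkQ (Btinv I)) (mkQ (Bf I i k)) := by
  have := RingQuot.mkAlgHom_rel ℚ (BosonicRel.tinv_central (c := c) i k)
  unfold Commute SemiconjBy
  simpa [map_mul] using this

lemma mkQ_Bqpow (e : ℤ) :
    mkQ (Bqpow I e) =
      if 0 ≤ e then mkQ (Bt I) ^ (2 * e.toNat) else mkQ (Btinv I) ^ (2 * (-e).toNat) := by
  unfold Bqpow
  split <;> simp [map_pow]

lemma commute_bq_bf (e : ℤ) (i : I) (k : ℤ) :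
    Commute (mkQ (Bqpow I e)) (mkQ (Bf I i k)) := by
  rw [mkQ_Bqpow]
  split
  · exact (commute_bt_bf c i k).pow_left _
  · exact (commute_btinv_bf c i k).pow_left _

lemma bq_mul_bq_neg (e : ℤ) : mkQ (Bqpow I e) * mkQ (Bqpow I (-e)) = 1 := by
  rcases lt_trichotomy e 0 with h | h | h
  · rw [mkQ_Bqpow, mkQ_Bqpow, if_neg (by omega), if_pos (by omega)]
    rw [← (commute_bt_btinv c).symm.mul_pow, btinv_mul_bt, one_pow]
  · subst h; simp [mkQ_Bqpow]
  · rw [mkQ_Bqpow, mkQ_Bqpow, if_pos (by omega), if_neg (by omega), neg_neg]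
    rw [← (commute_bt_btinv c).mul_pow, bt_mul_btinv, one_pow]

/-- The generator images for the bar map. -/
def gens : BosonicGen I → (BosonicExt c)ᵐᵒᵖ
  | .f i k => op (mkQ (Bf I i k))
  | .t => op (mkQ (Btinv I))
  | .tinv => op (mkQ (Bt I))

/-- The lift of the bar map to the free algebra. -/
def F : BFree I →ₐ[ℚ] (BosonicExt c)ᵐᵒᵖ := FreeAlgebra.lift ℚ (gens c)

@[simp] lemma F_Bf (i : I) (k : ℤ) : F c (Bf I i k) = op (mkQ (Bf I i k)) := by
  simp [F, Bf, gens]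

@[simp] lemma F_Bt : F c (Bt I) = op (mkQ (Btinv I)) := by simp [F, Bt, gens]

@[simp] lemma F_Btinv : F c (Btinv I) = op (mkQ (Bt I)) := by simp [F, Btinv, gens]

lemma F_Bqpow (e : ℤ) : F c (Bqpow I e) = op (mkQ (Bqpow I (-e))) := by
  rcases lt_trichotomy e 0 with h | h | h
  · rw [Bqpow, if_neg (by omega), mkQ_Bqpow, if_pos (by omega)]
    simp [map_pow, ← op_pow]
  · subst h; simp [Bqpow, mkQ_Bqpow]
  · rw [Bqpow, if_pos (by omega), mkQ_Bqpow, if_neg (by omega), neg_neg]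
    simp [map_pow, ← op_pow]

lemma F_rel (hdiag : ∀ i, c i i = 2) :
    ∀ ⦃a b : BFree I⦄, BosonicRel c a b → F c a = F c b := by
  intro a b h
  induction h with
  | t_tinv =>
      simp only [map_mul, map_one, F_Bt, F_Btinv, ← op_mul, ← op_one]
      rw [bt_mul_btinv]
  | tinv_t =>
      simp only [map_mul, map_one, F_Bt, F_Btinv, ← op_mul, ← op_one]
      rw [btinv_mul_bt]
  | t_central i k =>
      simp only [map_mul, F_Bt, F_Bf, ← op_mul]
      rw [(commute_btinv_bf c i k).eq]
  | tinv_central i k =>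
      simp only [map_mul, F_Bt, F_Btinv, F_Bf, ← op_mul]
      rw [(commute_bt_bf c i k).eq]
  | serre_zero i j p hij hc =>
      simp only [map_mul, F_Bf, ← op_mul]
      have hrel := RingQuot.mkAlgHom_rel ℚ (BosonicRel.serre_zero (c := c) i j p hij hc)
      simp only [map_mul] at hrel
      rw [hrel]
  | serre_one i j p hij hc =>
      have hrel := RingQuot.mkAlgHom_rel ℚ (BosonicRel.serre_one (c := c) i j p hij hc)
      simp only [map_mul, map_add, map_pow] at hrel ⊢
      simp only [F_Bf, F_Bt, F_Btinv, ← op_pow, ← op_mul, ← op_add]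
      congr 1
      have h1 : Commute (mkQ (Bt I) ^ 2 + mkQ (Btinv I) ^ 2)
          (mkQ (Bf I i p) * mkQ (Bf I j p) * mkQ (Bf I i p)) := by
        apply Commute.add_left
        · exact (((commute_bt_bf c i p).mul_right (commute_bt_bf c j p)).mul_right
            (commute_bt_bf c i p)).pow_left 2
        · exact (((commute_btinv_bf c i p).mul_right (commute_btinv_bf c j p)).mul_right
            (commute_btinv_bf c i p)).pow_left 2
      have h2 : mkQ (Bf I j p) * (mkQ (Bf I i p) * mkQ (Bf I i p))
            + mkQ (Bf I i p) * mkQ (Bf I i p) * mkQ (Bf I j p)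
          = (mkQ (Bt I) ^ 2 + mkQ (Btinv I) ^ 2)
            * (mkQ (Bf I i p) * mkQ (Bf I j p) * mkQ (Bf I i p)) := by
        rw [add_comm]; exact hrel
      rw [h2, h1.eq, mul_assoc (mkQ (Bf I i p)) (mkQ (Bf I j p)) (mkQ (Bf I i p)),
        add_comm (mkQ (Bt I) ^ 2) (mkQ (Btinv I) ^ 2)]
  | comm i j m p hmp hne =>
      have hrel := RingQuot.mkAlgHom_rel ℚ (BosonicRel.comm (c := c) i j m p hmp hne)
      simp only [map_mul] at hrel ⊢
      simp only [F_Bf, F_Bqpow, ← op_mul]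
      congr 1
      set e : ℤ := (-1 : ℤ) ^ (p - m + 1).toNat * c i j with he
      have hne2 : mkQ (Bqpow I (-e)) * mkQ (Bqpow I e) = 1 := by
        have := bq_mul_bq_neg c (-e)
        rwa [neg_neg] at this
      have h1 : mkQ (Bqpow I (-e)) * (mkQ (Bf I i m) * mkQ (Bf I j p))
          = mkQ (Bf I j p) * mkQ (Bf I i m) := by
        rw [hrel, ← mul_assoc, hne2, one_mul]
      rw [← h1, ← mul_assoc, (commute_bq_bf c (-e) i m).eq,
        mul_assoc, (commute_bq_bf c (-e) j p).eq, ← mul_assoc]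
  | comm_delta i m =>
      have hrel := RingQuot.mkAlgHom_rel ℚ (BosonicRel.comm_delta (c := c) i m)
      simp only [map_mul, map_add, map_sub, map_one, map_pow] at hrel ⊢
      simp only [F_Bf, F_Bt, F_Btinv, F_Bqpow, ← op_pow, ← op_mul, ← op_one, ← op_sub, ← op_add]
      congr 1
      have hd := hdiag i
      have hq2 : mkQ (Bqpow I (c i i)) = mkQ (Bt I) ^ 4 := by
        rw [mkQ_Bqpow, if_pos (by omega), hd]; congr 1
      have hqn : mkQ (Bqpow I (-c i i)) = mkQ (Btinv I) ^ 4 := by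
        rw [mkQ_Bqpow, if_neg (by omega), hd]; congr 1
      have hinv : mkQ (Btinv I) ^ 4 * mkQ (Bt I) ^ 4 = 1 := by
        rw [← (commute_bt_btinv c).symm.mul_pow, btinv_mul_bt, one_pow]
      have hqm : ∀ (k : ℤ), Commute (mkQ (Btinv I) ^ 4) (mkQ (Bf I i k)) :=
        fun k => (commute_btinv_bf c i k).pow_left 4
      rw [hq2] at hrel
      rw [hqn]
      have key : mkQ (Btinv I) ^ 4 * (mkQ (Bf I i m) * mkQ (Bf I i (m + 1)))
          = mkQ (Bf I i (m + 1)) * mkQ (Bf I i m) + (mkQ (Btinv I) ^ 4 - 1) := by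
        rw [hrel, mul_add, ← mul_assoc, hinv, one_mul, mul_sub, mul_one, hinv]
      have key2 : mkQ (Bf I i (m + 1)) * mkQ (Bf I i m)
          = mkQ (Btinv I) ^ 4 * (mkQ (Bf I i m) * mkQ (Bf I i (m + 1)))
            + (1 - mkQ (Btinv I) ^ 4) := by
        rw [key, add_assoc, sub_add_sub_cancel', sub_self, add_zero]
      rw [key2, ((hqm m).mul_right (hqm (m + 1))).eq]

end BarAux

/-- The bar map, fixing each `f_{i,k}` and sending `q^{±1/2} ↦ q^{∓1/2}`, extends to a
well-defined `ℚ`-algebra anti-automorphism of the bosonic extension algebra `𝒜̂`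
(formalized as a `ℚ`-algebra isomorphism onto the multiplicative opposite). -/
theorem exists_bar_antiautomorphism {I : Type} (c : I → I → ℤ)
    (hsym : ∀ i j, c i j = c j i) (hdiag : ∀ i, c i i = 2)
    (hoff : ∀ i j, i ≠ j → c i j = 0 ∨ c i j = -1) :
    ∃ bar : BosonicExt c ≃ₐ[ℚ] (BosonicExt c)ᵐᵒᵖ,
      (∀ (i : I) (k : ℤ), bar (bf c i k) = MulOpposite.op (bf c i k)) ∧
      bar (bt c) = MulOpposite.op (btinv c) ∧
      bar (btinv c) = MulOpposite.op (bt c) := by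
  classical
  open MulOpposite BarAux in
  -- the forward algebra hom
  let φ : BosonicExt c →ₐ[ℚ] (BosonicExt c)ᵐᵒᵖ :=
    RingQuot.liftAlgHom ℚ ⟨F c, F_rel c hdiag⟩
  have hφ_mk : ∀ x, φ (RingQuot.mkAlgHom ℚ (BosonicRel c) x) = F c x := fun x => by
    simp [φ, RingQuot.liftAlgHom_mkAlgHom_apply]
  have hφf : ∀ (i : I) (k : ℤ), φ (bf c i k) = op (bf c i k) := fun i k => by
    rw [bf, hφ_mk, F_Bf]
  have hφt : φ (bt c) = op (btinv c) := by rw [bt, hφ_mk, F_Bt]; rfl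
  have hφtinv : φ (btinv c) = op (bt c) := by rw [btinv, hφ_mk, F_Btinv]; rfl
  -- the reverse algebra hom
  let ψ : (BosonicExt c)ᵐᵒᵖ →ₐ[ℚ] BosonicExt c := AlgHom.opComm φ
  have hψ : ∀ x : BosonicExt c, ψ (op x) = (φ x).unop := fun x => rfl
  have h2 : ψ.comp φ = AlgHom.id ℚ (BosonicExt c) := by
    apply RingQuot.ringQuot_ext'
    apply FreeAlgebra.hom_ext
    funext g
    cases g with
    | f i k =>
        show ψ (φ (RingQuot.mkAlgHom ℚ (BosonicRel c) (Bf I i k))) = _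
        rw [show RingQuot.mkAlgHom ℚ (BosonicRel c) (Bf I i k) = bf c i k from rfl,
          hφf, hψ, hφf]
        rfl
    | t =>
        show ψ (φ (RingQuot.mkAlgHom ℚ (BosonicRel c) (Bt I))) = _
        rw [show RingQuot.mkAlgHom ℚ (BosonicRel c) (Bt I) = bt c from rfl, hφt, hψ, hφtinv]
        rfl
    | tinv =>
        show ψ (φ (RingQuot.mkAlgHom ℚ (BosonicRel c) (Btinv I))) = _
        rw [show RingQuot.mkAlgHom ℚ (BosonicRel c) (Btinv I) = btinv c from rfl,
          hφtinv, hψ, hφt]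
        rfl
  have h2' : ∀ x, ψ (φ x) = x := fun x => AlgHom.congr_fun h2 x
  have h1 : φ.comp ψ = AlgHom.id ℚ (BosonicExt c)ᵐᵒᵖ :=
    AlgHom.ext fun x => MulOpposite.unop_injective (h2' x.unop)
  refine ⟨AlgEquiv.ofAlgHom φ ψ h1 h2, fun i k => ?_, ?_, ?_⟩
  · show φ (bf c i k) = _; exact hφf i k
  · show φ (bt c) = _; exact hφt
  · show φ (btinv c) = _; exact hφtinv


end
end

section
/- Let β and β' be words related by a single 2-move swapping positions (k, k+1) with c_{i_k i_{k+1}} = 0. Then the exchange matrices satisfy B_{β'} = P B_β P^T where P is the permutation matrix of the transposition (k, k+1); i.e., b'_{σ(s)σ(t)} = b_{st} for the transposition σ = (k, k+1). -/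
/-!
A permutation `σ` of the positions relabels the word `β` as `β ∘ σ⁻¹`, and the entry `b_{st}`
only compares positions that carry equal colors or colors at distance `1`. So whenever `σ`
preserves the relative order of every such pair, it carries `B_β` to `B_{β ∘ σ⁻¹}`. The swap of
two adjacent positions preserves the order of every pair except the swapped one, whose colors
are distinct and at distance `0` for a 2-move.
-/

variable {I : Type*}

/-- `NextOcc i s t`: position `t` is the next occurrence after `s` of the color `i_s`
in the word `i : Fin r → I`, i.e. `t = s⁺` (equivalently `s = t⁻`). -/
def NextOcc {r : ℕ} (i : Fin r → I) (s t : Fin r) : Prop :=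
  s < t ∧ i t = i s ∧ ∀ u, s < u → u < t → i u ≠ i s

/-- The condition for `b_{st} = 1` in the exchange matrix `B_β`:
either `s = t⁻`, or `t < s < t⁺ < s⁺` (in the extended integers) and `d(i_s, i_t) = 1`. -/
def ExArrow {r : ℕ} (d : I → I → ℕ) (i : Fin r → I) (s t : Fin r) : Prop :=
  NextOcc i s t ∨
    (t < s ∧ d (i s) (i t) = 1 ∧
      ∃ tp, NextOcc i t tp ∧ s < tp ∧ ∀ sp, NextOcc i s sp → tp < sp)

open scoped Classical in
/-- The exchange matrix `B_β` of the word `β = (i_1, …, i_r)`: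
`b_{st} = 1` if `s = t⁻` or `t < s < t⁺ < s⁺` with `d(i_s,i_t) = 1`;
`b_{st} = -1` if `t = s⁻` or `s < t < s⁺ < t⁺` with `d(i_s,i_t) = 1`;
`b_{st} = 0` otherwise. -/
noncomputable def Bword {r : ℕ} (d : I → I → ℕ) (i : Fin r → I) (s t : Fin r) : ℤ :=
  if ExArrow d i s t then 1 else if ExArrow d i t s then -1 else 0

theorem Equiv.Perm.lt_iff_lt_comm {α : Type*} [LinearOrder α] {σ : Equiv.Perm α} {u v : α}
    (h : σ u < σ v ↔ u < v) : σ v < σ u ↔ v < u := by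
  rw [← not_le, le_iff_lt_or_eq, h, σ.injective.eq_iff, ← le_iff_lt_or_eq, not_le]

theorem Fin.swap_lt_swap_iff {r : ℕ} {a b : Fin r} (hab : (b : ℕ) = a + 1) {u v : Fin r}
    (huv : s(u, v) ≠ s(a, b)) : Equiv.swap a b u < Equiv.swap a b v ↔ u < v := by
  simp only [ne_eq, Sym2.eq_iff, not_or, not_and_or, Fin.ext_iff] at huv
  simp only [Fin.lt_def, Equiv.swap_apply_def, Fin.ext_iff]
  split_ifs <;> omega

section Relabel

variable {r : ℕ} {σ : Equiv.Perm (Fin r)} {i : Fin r → I}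

theorem nextOcc_comp_symm_iff (hσ : ∀ u v, i u = i v → (σ u < σ v ↔ u < v)) (s t : Fin r) :
    NextOcc (i ∘ σ.symm) (σ s) (σ t) ↔ NextOcc i s t := by
  simp only [NextOcc, Function.comp_apply, Equiv.symm_apply_apply]
  rw [σ.surjective.forall]
  simp only [Equiv.symm_apply_apply]
  rw [and_left_comm, and_left_comm (a := s < t)]
  refine and_congr_right fun hts => and_congr (hσ s t hts.symm) (forall_congr' fun v => ?_)
  by_cases hvs : i v = i s
  · rw [hσ s v hvs.symm, hσ v t (hvs.trans hts.symm)]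
  · simp only [hvs, ne_eq, not_false_eq_true, implies_true]

variable {d : I → I → ℕ}

theorem exArrow_comp_symm_iff (hσ : ∀ u v, i u = i v ∨ d (i u) (i v) ≠ 0 → (σ u < σ v ↔ u < v))
    (s t : Fin r) : ExArrow d (i ∘ σ.symm) (σ s) (σ t) ↔ ExArrow d i s t := by
  have hocc : ∀ u v, NextOcc (i ∘ σ.symm) (σ u) (σ v) ↔ NextOcc i u v :=
    nextOcc_comp_symm_iff fun u v h => hσ u v (.inl h)
  simp only [ExArrow, Function.comp_apply, Equiv.symm_apply_apply]
  refine or_congr (hocc s t) ?_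
  rw [and_left_comm, and_left_comm (a := t < s)]
  refine and_congr_right fun hst => and_congr
    (Equiv.Perm.lt_iff_lt_comm (hσ s t (.inr (by omega)))) (σ.exists_congr fun tp => ?_).symm
  rw [hocc]
  refine and_congr_right fun htp => and_congr (hσ s tp (.inr ?_)).symm
    (σ.forall_congr fun sp => ?_)
  · rw [htp.2.1]; omega
  rw [hocc]
  refine imp_congr_right fun hsp => (Equiv.Perm.lt_iff_lt_comm (hσ sp tp (.inr ?_))).symm
  rw [hsp.2.1, htp.2.1]; omega

theorem Bword_comp_symm (hσ : ∀ u v, i u = i v ∨ d (i u) (i v) ≠ 0 → (σ u < σ v ↔ u < v))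
    (s t : Fin r) : Bword d (i ∘ σ.symm) (σ s) (σ t) = Bword d i s t := by
  rw [Bword, Bword, exArrow_comp_symm_iff hσ, exArrow_comp_symm_iff hσ]

end Relabel

theorem Bword_two_move_general {r : ℕ} (d : I → I → ℕ)
    (hsym : ∀ a b, d a b = d b a)
    (i : Fin r → I) (k : ℕ) (hk : k + 1 < r)
    (hne : i ⟨k, Nat.lt_of_succ_lt hk⟩ ≠ i ⟨k + 1, hk⟩)
    (hd : d (i ⟨k, Nat.lt_of_succ_lt hk⟩) (i ⟨k + 1, hk⟩) = 0) :
    ∀ s t : Fin r,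
      Bword d (i ∘ Equiv.swap ⟨k, Nat.lt_of_succ_lt hk⟩ ⟨k + 1, hk⟩)
        (Equiv.swap ⟨k, Nat.lt_of_succ_lt hk⟩ ⟨k + 1, hk⟩ s)
        (Equiv.swap ⟨k, Nat.lt_of_succ_lt hk⟩ ⟨k + 1, hk⟩ t) =
      Bword d i s t := by
  intro s t
  refine Equiv.symm_swap (α := Fin r) _ _ ▸ Bword_comp_symm (fun u v hcomm => ?_) s t
  refine Fin.swap_lt_swap_iff rfl fun huv => ?_
  rcases Sym2.eq_iff.mp huv with ⟨rfl, rfl⟩ | ⟨rfl, rfl⟩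
  · exact hcomm.elim hne (· hd)
  · exact hcomm.elim (hne ·.symm) (· (hsym _ _ ▸ hd))

/-- If `β'` is obtained from `β` by a 2-move swapping positions `(k, k+1)` whose colors
are distinct and non-adjacent in the Dynkin diagram (`c_{i_k i_{k+1}} = 0`, i.e.
`d(i_k, i_{k+1}) = 0`), then the exchange matrices satisfy `B_{β'} = P B_β Pᵀ` for the
transposition `P = (k, k+1)`: `b'_{σ(s) σ(t)} = b_{st}`. -/
theorem Bword_two_move {r : ℕ} (d : I → I → ℕ)
    (hsym : ∀ a b, d a b = d b a) (hdiag : ∀ a, d a a = 0)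
    (i : Fin r → I) (k : ℕ) (hk : k + 1 < r)
    (hne : i ⟨k, Nat.lt_of_succ_lt hk⟩ ≠ i ⟨k + 1, hk⟩)
    (hd : d (i ⟨k, Nat.lt_of_succ_lt hk⟩) (i ⟨k + 1, hk⟩) = 0) :
    ∀ s t : Fin r,
      Bword d (i ∘ Equiv.swap ⟨k, Nat.lt_of_succ_lt hk⟩ ⟨k + 1, hk⟩)
        (Equiv.swap ⟨k, Nat.lt_of_succ_lt hk⟩ ⟨k + 1, hk⟩ s)
        (Equiv.swap ⟨k, Nat.lt_of_succ_lt hk⟩ ⟨k + 1, hk⟩ t) =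
      Bword d i s t :=
  Bword_two_move_general d hsym i k hk hne hd
end
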